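/- Let ρ, σ be density matrices on a finite-dimensional Hilbert space with σ invertible, and let T be a quantum channel (completely positive trace-preserving map) with T(σ) invertible. If ρ = σ T*(T(σ)^{-1} T(ρ)) (where T* is the adjoint of T), then ρ^2 = σ T*(T(σ)^{-1} T(ρ)^2 T(σ)^{-1}) σ, and hence ρ = (σ T*(T(σ)^{-1} T(ρ)^2 T(σ)^{-1}) σ)^{1/2}. -/

import Mathlib

open Matrix BigOperators
open scoped Kronecker ComplexOrder

noncomputable section

namespace BSQMC

variable {H K : Type*} [Fintype H] [DecidableEq H] [Fintype K] [DecidableEq K]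

/-- The `n`-fold amplification `id_n ⊗ T` of a linear map on matrices. -/
def amplify (nn : ℕ) (T : Matrix H H ℂ →ₗ[ℂ] Matrix K K ℂ)
    (M : Matrix (Fin nn × H) (Fin nn × H) ℂ) : Matrix (Fin nn × K) (Fin nn × K) ℂ :=
  Matrix.of fun p q => T (Matrix.of fun h h' => M (p.1, h) (q.1, h')) p.2 q.2

/-- Complete positivity of a linear map on matrices. -/
def IsCompletelyPositive (T : Matrix H H ℂ →ₗ[ℂ] Matrix K K ℂ) : Prop :=
  ∀ (nn : ℕ) (M : Matrix (Fin nn × H) (Fin nn × H) ℂ),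
    M.PosSemidef → (amplify nn T M).PosSemidef

/-- Trace preservation. -/
def IsTracePreserving (T : Matrix H H ℂ →ₗ[ℂ] Matrix K K ℂ) : Prop :=
  ∀ M : Matrix H H ℂ, (T M).trace = M.trace

/-- `S` is the Hilbert-Schmidt adjoint of `T`. -/
def IsAdjointPair (T : Matrix H H ℂ →ₗ[ℂ] Matrix K K ℂ)
    (S : Matrix K K ℂ →ₗ[ℂ] Matrix H H ℂ) : Prop :=
  ∀ (X : Matrix H H ℂ) (Y : Matrix K K ℂ), (S Y * X).trace = (Y * T X).trace

/-- The positive semidefinite square root of a positive semidefinite matrix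
(the definition `Matrix.PosSemidef.sqrt` of the older Mathlib, removed since). -/
def _root_.Matrix.PosSemidef.sqrt {n 𝕜 : Type*} [Fintype n] [DecidableEq n] [RCLike 𝕜]
    {A : Matrix n n 𝕜} (hA : A.PosSemidef) : Matrix n n 𝕜 :=
  hA.1.eigenvectorUnitary.1 * diagonal ((↑) ∘ (√·) ∘ hA.1.eigenvalues) *
  (star hA.1.eigenvectorUnitary : Matrix n n 𝕜)

/-! ### Auxiliary lemmas -/
set_option linter.unusedSectionVars false
variable {ι : Type*} [Fintype ι] [DecidableEq ι]

section sqrtPort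
open scoped MatrixOrder
lemma psd_sqrt_eq_cfc {A : Matrix ι ι ℂ} (hA : A.PosSemidef) : hA.sqrt = CFC.sqrt A := by
  rw [CFC.sqrt_eq_real_sqrt A hA.nonneg, cfcₙ_eq_cfc, hA.1.cfc_eq, IsHermitian.cfc,
    Unitary.conjStarAlgAut_apply]
  rfl
lemma _root_.Matrix.PosSemidef.sqrt_mul_self {A : Matrix ι ι ℂ} (hA : A.PosSemidef) :
    hA.sqrt * hA.sqrt = A := by
  rw [psd_sqrt_eq_cfc]; exact CFC.sqrt_mul_sqrt_self A hA.nonneg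
lemma _root_.Matrix.PosSemidef.posSemidef_sqrt {A : Matrix ι ι ℂ} (hA : A.PosSemidef) :
    hA.sqrt.PosSemidef := by
  rw [psd_sqrt_eq_cfc]; exact (CFC.sqrt_nonneg A).posSemidef
lemma _root_.Matrix.PosSemidef.eq_sqrt_of_sq_eq {A B : Matrix ι ι ℂ} (hA : A.PosSemidef)
    (hB : B.PosSemidef) (hAB : A ^ 2 = B) : A = hB.sqrt := by
  rw [psd_sqrt_eq_cfc, ← hAB, CFC.sqrt_sq A hA.nonneg]
lemma psd_exists_conjTranspose_mul_self {A : Matrix ι ι ℂ} (hA : A.PosSemidef) :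
    ∃ C : Matrix ι ι ℂ, A = Cᴴ * C :=
  ⟨hA.sqrt, by rw [hA.posSemidef_sqrt.1, hA.sqrt_mul_self]⟩
end sqrtPort

lemma trace_mul_sum (A B : Matrix ι ι ℂ) :
    (A * B).trace = ∑ i, ∑ j, A i j * B j i := by
  simp [Matrix.trace, Matrix.mul_apply]

lemma eq_of_forall_trace_mul_eq {A B : Matrix ι ι ℂ}
    (h : ∀ X : Matrix ι ι ℂ, (A * X).trace = (B * X).trace) : A = B := by
  ext i j
  have := h (Matrix.single j i 1)
  simpa [Matrix.trace, Matrix.mul_apply, Matrix.single, Matrix.of_apply, Matrix.diag,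
    ite_and, Finset.sum_ite_eq, Finset.sum_ite_eq'] using this

lemma psd_trace_nonneg {A : Matrix ι ι ℂ} (hA : A.PosSemidef) : 0 ≤ A.trace := by
  rw [Matrix.trace]
  refine Finset.sum_nonneg fun i _ => ?_
  have := hA.dotProduct_mulVec_nonneg (Pi.single i 1)
  simpa [dotProduct, Matrix.mulVec, Pi.single_apply, Finset.sum_ite_eq] using this

lemma trace_mul_psd_nonneg {A B : Matrix ι ι ℂ} (hA : A.PosSemidef) (hB : B.PosSemidef) :
    0 ≤ (A * B).trace := by
  obtain ⟨C, rfl⟩ := psd_exists_conjTranspose_mul_self hB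
  rw [← Matrix.mul_assoc, Matrix.trace_mul_cycle]
  exact psd_trace_nonneg (hA.mul_mul_conjTranspose_same C)

lemma psd_trace_eq_zero {A : Matrix ι ι ℂ} (hA : A.PosSemidef) (h : A.trace = 0) : A = 0 := by
  obtain ⟨C, rfl⟩ := psd_exists_conjTranspose_mul_self hA
  suffices hC : C = 0 by simp [hC]
  have htr : ∑ j, (star (fun i => C i j)) ⬝ᵥ (fun i => C i j) = 0 := by
    rw [← h, trace_mul_sum]
    simp only [Matrix.conjTranspose_apply, dotProduct, Pi.star_apply]
  ext i j
  have hj := (Finset.sum_eq_zero_iff_of_nonneg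
    (fun j _ => dotProduct_star_self_nonneg _)).mp htr j (Finset.mem_univ j)
  exact congrFun (dotProduct_star_self_eq_zero.mp hj) i

lemma star_dot_eq_trace (A : Matrix ι ι ℂ) (v : ι → ℂ) :
    star v ⬝ᵥ (A *ᵥ v) = (A * Matrix.vecMulVec v (star v)).trace := by
  rw [trace_mul_sum]
  simp only [dotProduct, Matrix.mulVec, Matrix.vecMulVec_apply, Pi.star_apply,
    Finset.mul_sum]
  refine Finset.sum_congr rfl fun i _ => Finset.sum_congr rfl fun j _ => by
    simp [dotProduct]; ring

lemma vecMulVec_posSemidef (v : ι → ℂ) : (Matrix.vecMulVec v (star v)).PosSemidef := by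
  rw [Matrix.vecMulVec_eq Unit]
  have : Matrix.replicateRow Unit (star v) = (Matrix.replicateCol Unit v)ᴴ := by
    ext a b; simp
  rw [this]
  exact Matrix.posSemidef_self_mul_conjTranspose _


lemma amplify_adjoint_trace
    {T : Matrix H H ℂ →ₗ[ℂ] Matrix K K ℂ} {Tad : Matrix K K ℂ →ₗ[ℂ] Matrix H H ℂ}
    (hadj : IsAdjointPair T Tad) (nn : ℕ)
    (M : Matrix (Fin nn × K) (Fin nn × K) ℂ) (X : Matrix (Fin nn × H) (Fin nn × H) ℂ) :
    (amplify nn Tad M * X).trace = (M * amplify nn T X).trace := by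
  have lhs : (amplify nn Tad M * X).trace
      = ∑ i : Fin nn, ∑ j : Fin nn,
          (Tad (Matrix.of fun h h' => M (i, h) (j, h')) *
            Matrix.of (fun h' h => X (j, h') (i, h))).trace := by
    rw [trace_mul_sum]
    simp only [Fintype.sum_prod_type, trace_mul_sum]
    refine Finset.sum_congr rfl fun i _ => ?_
    rw [Finset.sum_comm]
    rfl
  have rhs : (M * amplify nn T X).trace
      = ∑ i : Fin nn, ∑ j : Fin nn,
          ((Matrix.of fun h h' => M (i, h) (j, h')) *
            T (Matrix.of (fun h' h => X (j, h') (i, h)))).trace := by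
    rw [trace_mul_sum]
    simp only [Fintype.sum_prod_type, trace_mul_sum]
    refine Finset.sum_congr rfl fun i _ => ?_
    rw [Finset.sum_comm]
    rfl
  rw [lhs, rhs]
  exact Finset.sum_congr rfl fun i _ => Finset.sum_congr rfl fun j _ => hadj _ _


/-- Column matrix `C = [[1, Z],[0,0]]` used in the 2×2 block trick. -/
def pairC (Z : Matrix K K ℂ) : Matrix (Fin 2 × K) (Fin 2 × K) ℂ :=
  Matrix.of fun p q =>
    if p.1 = 0 then (if q.1 = 0 then (1 : Matrix K K ℂ) p.2 q.2 else Z p.2 q.2) else 0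

lemma pair_block (Z : Matrix K K ℂ) (i j : Fin 2) (a b : K) :
    ((pairC Z)ᴴ * pairC Z) (i, a) (j, b)
      = ((if i = 0 then 1 else Zᴴ : Matrix K K ℂ) *
          (if j = 0 then 1 else Z : Matrix K K ℂ)) a b := by
  simp only [Matrix.mul_apply, Matrix.conjTranspose_apply, pairC, Matrix.of_apply,
    Fintype.sum_prod_type, Fin.sum_univ_two, show ((1 : Fin 2) = 0) = False by simp,
    if_true, if_false, ite_true, ite_false, star_zero, zero_mul, mul_zero,
    Finset.sum_const_zero, add_zero]
  by_cases hi : i = 0 <;> by_cases hj : j = 0 <;>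
    simp [hi, hj, Matrix.one_apply, Matrix.conjTranspose_apply, Finset.sum_ite_eq,
      Finset.sum_ite_eq', apply_ite, ite_mul, mul_ite] <;>
    simp [eq_comm]

lemma pair_block_mat (Z : Matrix K K ℂ) (i j : Fin 2) :
    (Matrix.of fun a b => ((pairC Z)ᴴ * pairC Z) (i, a) (j, b))
      = ((if i = 0 then 1 else Zᴴ : Matrix K K ℂ) *
          (if j = 0 then 1 else Z : Matrix K K ℂ)) := by
  ext a b; exact pair_block Z i j a b

lemma star_preserving_of_cp {T : Matrix H H ℂ →ₗ[ℂ] Matrix K K ℂ}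
    (hCP : IsCompletelyPositive T) (X : Matrix H H ℂ) : T Xᴴ = (T X)ᴴ := by
  have hpsd := hCP 2 ((pairC X)ᴴ * pairC X) (Matrix.posSemidef_conjTranspose_mul_self _)
  have hherm := hpsd.1
  ext h h'
  have := congrFun (congrFun hherm ((0, h') : Fin 2 × K)) ((1, h) : Fin 2 × K)
  simp only [Matrix.conjTranspose_apply, amplify, Matrix.of_apply] at this
  rw [pair_block_mat, pair_block_mat] at this
  simp only [show ((1 : Fin 2) = 0) = False by simp, show ((0 : Fin 2) = 0) = True by simp,
    if_true, if_false, ite_true, ite_false, Matrix.one_mul, Matrix.mul_one] at this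
  rw [Matrix.conjTranspose_apply, ← this, star_star]


lemma adjoint_unital {T : Matrix H H ℂ →ₗ[ℂ] Matrix K K ℂ}
    {Tad : Matrix K K ℂ →ₗ[ℂ] Matrix H H ℂ}
    (hTP : IsTracePreserving T) (hadj : IsAdjointPair T Tad) : Tad 1 = 1 := by
  apply eq_of_forall_trace_mul_eq
  intro X
  rw [hadj X 1, Matrix.one_mul, hTP, Matrix.one_mul]

lemma adjoint_star_preserving {T : Matrix H H ℂ →ₗ[ℂ] Matrix K K ℂ}
    {Tad : Matrix K K ℂ →ₗ[ℂ] Matrix H H ℂ}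
    (hCP : IsCompletelyPositive T) (hadj : IsAdjointPair T Tad)
    (W : Matrix K K ℂ) : Tad Wᴴ = (Tad W)ᴴ := by
  apply eq_of_forall_trace_mul_eq
  intro X
  rw [hadj X Wᴴ]
  rw [show (Tad W)ᴴ * X = (Xᴴ * Tad W)ᴴ by
    rw [Matrix.conjTranspose_mul, Matrix.conjTranspose_conjTranspose]]
  rw [Matrix.trace_conjTranspose, Matrix.trace_mul_comm Xᴴ, hadj Xᴴ W,
    star_preserving_of_cp hCP X, ← Matrix.trace_conjTranspose,
    Matrix.conjTranspose_mul, Matrix.conjTranspose_conjTranspose,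
    Matrix.trace_mul_comm]

lemma amplify_cp_of_adjoint {T : Matrix H H ℂ →ₗ[ℂ] Matrix K K ℂ}
    {Tad : Matrix K K ℂ →ₗ[ℂ] Matrix H H ℂ}
    (hCP : IsCompletelyPositive T) (hadj : IsAdjointPair T Tad)
    (nn : ℕ) (M : Matrix (Fin nn × K) (Fin nn × K) ℂ) (hM : M.PosSemidef) :
    (amplify nn Tad M).PosSemidef := by
  refine Matrix.PosSemidef.of_dotProduct_mulVec_nonneg ?_ ?_
  · ext p q
    simp only [Matrix.conjTranspose_apply, amplify, Matrix.of_apply]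
    have hb : (Matrix.of fun h h' => M (q.1, h) (p.1, h'))
        = (Matrix.of fun h h' => M (p.1, h) (q.1, h'))ᴴ := by
      ext h h'
      simp only [Matrix.conjTranspose_apply, Matrix.of_apply]
      conv_lhs => rw [← hM.1]
      rfl
    rw [hb, adjoint_star_preserving hCP hadj]
    simp
  · intro v
    rw [star_dot_eq_trace, amplify_adjoint_trace hadj]
    exact trace_mul_psd_nonneg hM (hCP nn _ (vecMulVec_posSemidef v))


theorem bs_recovery_implies_symmetric_recovery
    (T : Matrix H H ℂ →ₗ[ℂ] Matrix K K ℂ) (Tad : Matrix K K ℂ →ₗ[ℂ] Matrix H H ℂ)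
    (hCP : IsCompletelyPositive T) (hTP : IsTracePreserving T)
    (hadj : IsAdjointPair T Tad)
    (ρ σ : Matrix H H ℂ)
    (hρ : ρ.PosSemidef) (hρtr : ρ.trace = 1)
    (hσ : σ.PosDef) (hσtr : σ.trace = 1)
    (hTσ : (T σ).PosDef)
    (hrec : ρ = σ * Tad ((T σ)⁻¹ * T ρ)) :
    ρ * ρ = σ * Tad ((T σ)⁻¹ * (T ρ * T ρ) * (T σ)⁻¹) * σ ∧
      ∃ h : (σ * Tad ((T σ)⁻¹ * (T ρ * T ρ) * (T σ)⁻¹) * σ).PosSemidef,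
        ρ = h.sqrt := by
  -- invertibility facts
  have hσd : IsUnit σ.det := hσ.det_pos.ne'.isUnit
  have hσl : σ⁻¹ * σ = 1 := Matrix.nonsing_inv_mul σ hσd
  have hσr : σ * σ⁻¹ = 1 := Matrix.mul_nonsing_inv σ hσd
  have hGd : IsUnit (T σ).det := hTσ.det_pos.ne'.isUnit
  have hGl : (T σ)⁻¹ * T σ = 1 := Matrix.nonsing_inv_mul _ hGd
  -- Hermitian facts
  have hTρh : (T ρ)ᴴ = T ρ := by rw [← star_preserving_of_cp hCP ρ, hρ.1]
  have hGinvh : ((T σ)⁻¹)ᴴ = (T σ)⁻¹ := hTσ.1.inv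
  have hσinvh : (σ⁻¹)ᴴ = σ⁻¹ := hσ.1.inv
  set Z : Matrix K K ℂ := T ρ * (T σ)⁻¹ with hZ
  have hZc : Zᴴ = (T σ)⁻¹ * T ρ := by
    rw [hZ, Matrix.conjTranspose_mul, hTρh, hGinvh]
  -- recovery gives `Tad Zᴴ` and `Tad Z`
  have hTadY : Tad ((T σ)⁻¹ * T ρ) = σ⁻¹ * ρ := by
    have h1 : σ⁻¹ * ρ = σ⁻¹ * (σ * Tad ((T σ)⁻¹ * T ρ)) := by rw [← hrec]
    rw [← Matrix.mul_assoc, hσl, Matrix.one_mul] at h1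
    exact h1.symm
  have hTadZ : Tad Z = ρ * σ⁻¹ := by
    have : Z = ((T σ)⁻¹ * T ρ)ᴴ := by
      rw [Matrix.conjTranspose_mul, hTρh, hGinvh]
    rw [this, adjoint_star_preserving hCP hadj, hTadY, Matrix.conjTranspose_mul,
      hσinvh, hρ.1]
  have hTadZc : (Tad Z)ᴴ = σ⁻¹ * ρ := by
    rw [hTadZ, Matrix.conjTranspose_mul, hσinvh, hρ.1]
  -- the 2×2 block positivity
  have hpsd := amplify_cp_of_adjoint hCP hadj 2 ((pairC Z)ᴴ * pairC Z)
    (Matrix.posSemidef_conjTranspose_mul_self _)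
  set e : H ⊕ H → Fin 2 × H := Sum.elim (fun h => (0, h)) (fun h => (1, h)) with he
  have hsub := hpsd.submatrix e
  have hEq : (amplify 2 Tad ((pairC Z)ᴴ * pairC Z)).submatrix e e
      = Matrix.fromBlocks 1 (Tad Z) (Tad Z)ᴴ (Tad (Zᴴ * Z)) := by
    have hamp : ∀ (i j : Fin 2) (a b : H),
        amplify 2 Tad ((pairC Z)ᴴ * pairC Z) (i, a) (j, b)
          = Tad ((if i = 0 then 1 else Zᴴ : Matrix K K ℂ) *
              (if j = 0 then 1 else Z : Matrix K K ℂ)) a b := by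
      intro i j a b
      show Tad (Matrix.of fun h h' => ((pairC Z)ᴴ * pairC Z) (i, h) (j, h')) a b = _
      rw [pair_block_mat]
    ext p q
    cases p with
    | inl a =>
      cases q with
      | inl b =>
        simp only [Matrix.submatrix_apply, he, Sum.elim_inl, hamp,
          Matrix.fromBlocks_apply₁₁]
        simp [adjoint_unital hTP hadj]
      | inr b =>
        simp only [Matrix.submatrix_apply, he, Sum.elim_inl, Sum.elim_inr, hamp,
          Matrix.fromBlocks_apply₁₂]
        simp
    | inr a =>
      cases q with
      | inl b =>
        simp only [Matrix.submatrix_apply, he, Sum.elim_inl, Sum.elim_inr, hamp,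
          Matrix.fromBlocks_apply₂₁]
        simp [adjoint_star_preserving hCP hadj]
      | inr b =>
        simp only [Matrix.submatrix_apply, he, Sum.elim_inr, hamp,
          Matrix.fromBlocks_apply₂₂]
        simp
  rw [hEq] at hsub
  haveI : Invertible (1 : Matrix H H ℂ) := invertibleOne
  have hdelta := (Matrix.PosDef.fromBlocks₁₁ (Tad Z) (Tad (Zᴴ * Z))
    Matrix.PosDef.one).mp hsub
  rw [inv_one, Matrix.mul_one] at hdelta
  -- trace of the defect against σ vanishes
  have htr : ((Tad (Zᴴ * Z) - (Tad Z)ᴴ * Tad Z) * σ).trace = 0 := by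
    rw [Matrix.sub_mul, Matrix.trace_sub, hadj σ (Zᴴ * Z)]
    have e1 : (Zᴴ * Z * T σ).trace = ((T σ)⁻¹ * (T ρ * (T ρ * 1))).trace := by
      rw [hZc, hZ]
      simp only [Matrix.mul_assoc, hGl]
    have e2 : ((Tad Z)ᴴ * Tad Z * σ).trace = (σ⁻¹ * (ρ * (ρ * 1))).trace := by
      rw [hTadZc, hTadZ]
      simp only [Matrix.mul_assoc, hσl]
    have e3 : (σ⁻¹ * (ρ * (ρ * 1))).trace = ((T σ)⁻¹ * (T ρ * (T ρ * 1))).trace := by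
      simp only [Matrix.mul_one]
      rw [← Matrix.mul_assoc, ← hTadY, hadj ρ ((T σ)⁻¹ * T ρ), ← Matrix.mul_assoc]
    rw [e1, e2, e3, sub_self]
  -- hence the defect vanishes
  have hΔ0 : Tad (Zᴴ * Z) - (Tad Z)ᴴ * Tad Z = 0 := by
    set Δ := Tad (Zᴴ * Z) - (Tad Z)ᴴ * Tad Z with hΔ
    set s := hσ.posSemidef.sqrt with hs
    have hss : s * s = σ := hσ.posSemidef.sqrt_mul_self
    have hsherm : sᴴ = s := hσ.posSemidef.posSemidef_sqrt.1
    have h1 : (s * Δ * s).PosSemidef := by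
      have := hdelta.conjTranspose_mul_mul_same s
      rwa [hsherm] at this
    have h2 : (s * Δ * s).trace = 0 := by
      rw [Matrix.trace_mul_cycle, hss, Matrix.trace_mul_comm]
      exact htr
    have h3 : s * Δ * s = 0 := psd_trace_eq_zero h1 h2
    have hsd : IsUnit s.det := by
      have hd : s.det * s.det = σ.det := by rw [← Matrix.det_mul, hss]
      have : σ.det ≠ 0 := hσ.det_pos.ne'
      refine isUnit_iff_ne_zero.mpr fun h0 => this ?_
      rw [← hd, h0, mul_zero]
    calc Δ = (s⁻¹ * s) * Δ * (s * s⁻¹) := by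
          rw [Matrix.nonsing_inv_mul _ hsd, Matrix.mul_nonsing_inv _ hsd,
            Matrix.one_mul, Matrix.mul_one]
      _ = s⁻¹ * (s * Δ * s) * s⁻¹ := by simp only [Matrix.mul_assoc]
      _ = 0 := by rw [h3, Matrix.mul_zero, Matrix.zero_mul]
  have hTadZZ : Tad (Zᴴ * Z) = (Tad Z)ᴴ * Tad Z := by rwa [sub_eq_zero] at hΔ0
  -- main identity
  have hZZ : (T σ)⁻¹ * (T ρ * T ρ) * (T σ)⁻¹ = Zᴴ * Z := by
    rw [hZc, hZ]
    simp only [Matrix.mul_assoc]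
  have key : σ * Tad ((T σ)⁻¹ * (T ρ * T ρ) * (T σ)⁻¹) * σ = ρ * ρ := by
    rw [hZZ, hTadZZ, hTadZc, hTadZ]
    have : σ * ((σ⁻¹ * ρ) * (ρ * σ⁻¹)) * σ = (σ * σ⁻¹) * ((ρ * ρ) * (σ⁻¹ * σ)) := by
      simp only [Matrix.mul_assoc]
    rw [this, hσr, hσl, Matrix.one_mul, Matrix.mul_one]
  have hsq : (ρ * ρ).PosSemidef := by
    have := Matrix.posSemidef_conjTranspose_mul_self ρ
    rwa [hρ.1] at this
  have hkey : (σ * Tad ((T σ)⁻¹ * (T ρ * T ρ) * (T σ)⁻¹) * σ).PosSemidef := key ▸ hsq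
  exact ⟨key.symm, hkey, hρ.eq_sqrt_of_sq_eq hkey (by rw [pow_two, key])⟩

end BSQMC
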